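/- arXiv:1905.11146 — 4 statements merged into one kernel-verified Lean document; each statement's English description precedes it below -/
import Mathlib

section
/- Let p be an odd prime and α, β ∈ 1 + pℤ_p multiplicatively independent such that β^ℤ is dense in 1 + p^kℤ_p where k = v_p(β − 1). Then α^ℤ is codense in α^ℤ · β^ℤ: for every g ∈ α^ℤ β^ℤ and every N ∈ ℕ there exists h ∈ (α^ℤ β^ℤ) \ α^ℤ with v_p(g − h) ≥ N. -/
/-! If `g = αⁿ βᵐ` with `m ≠ 0`, take `h = g`; if `m = 0`, take `h = αⁿ β^(p^N)`, since
`β ≡ 1 mod p` forces `β^(p^N) ≡ 1 mod p^(N+1)`. -/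

theorem PadicInt.norm_pow_prime_pow_sub_one_le {p : ℕ} [Fact p.Prime] {x : ℤ_[p]}
    (hx : (p : ℤ_[p]) ∣ x - 1) (N : ℕ) :
    ‖x ^ p ^ N - 1‖ ≤ (p : ℝ) ^ (-((N + 1 : ℕ) : ℤ)) := by
  rw [PadicInt.norm_le_pow_iff_mem_span_pow, Ideal.mem_span_singleton]
  simpa using dvd_sub_pow_of_dvd_sub hx N

theorem PadicInt.norm_units_sub_units_mul {p : ℕ} [Fact p.Prime] (u v : ℤ_[p]ˣ) :
    ‖(u : ℤ_[p]) - ((u * v : ℤ_[p]ˣ) : ℤ_[p])‖ = ‖(v : ℤ_[p]) - 1‖ := by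
  rw [Units.val_mul, ← mul_one (u : ℤ_[p]), mul_assoc, one_mul, ← mul_sub, norm_mul,
    PadicInt.norm_units, one_mul, norm_sub_rev]

theorem stmt_9_general (p : ℕ) [Fact p.Prime] (α β : ℤ_[p]ˣ)
    (hβ : ∃ z : ℤ_[p], (β : ℤ_[p]) = 1 + (p : ℤ_[p]) * z) :
    -- α^ℤ is codense in α^ℤ·β^ℤ
    ∀ n m : ℤ, ∀ N : ℕ, ∃ n' m' : ℤ, m' ≠ 0 ∧
      ‖((α ^ n * β ^ m : ℤ_[p]ˣ) : ℤ_[p]) - ((α ^ n' * β ^ m' : ℤ_[p]ˣ) : ℤ_[p])‖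
        ≤ (p : ℝ) ^ (-(N : ℤ)) := by
  intro n m N
  by_cases hm : m = 0
  · subst hm
    have hp : 1 ≤ (p : ℝ) := mod_cast (Fact.out : p.Prime).one_lt.le
    have hβp : (p : ℤ_[p]) ∣ (β : ℤ_[p]) - 1 := by
      obtain ⟨z, hz⟩ := hβ
      exact ⟨z, by rw [hz, add_sub_cancel_left]⟩
    refine ⟨n, ((p ^ N : ℕ) : ℤ), by exact_mod_cast (pow_pos (Fact.out : p.Prime).pos N).ne', ?_⟩
    rw [zpow_zero, mul_one, PadicInt.norm_units_sub_units_mul, zpow_natCast, Units.val_pow_eq_pow_val]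
    calc ‖(β : ℤ_[p]) ^ p ^ N - 1‖ ≤ (p : ℝ) ^ (-((N + 1 : ℕ) : ℤ)) :=
          PadicInt.norm_pow_prime_pow_sub_one_le hβp N
      _ ≤ (p : ℝ) ^ (-(N : ℤ)) := zpow_le_zpow_right₀ hp (by omega)
  · exact ⟨n, m, hm, by simp⟩

theorem stmt_9 (p : ℕ) [Fact p.Prime] (hp2 : p ≠ 2) (α β : ℤ_[p]ˣ)
    (hα : ∃ z : ℤ_[p], (α : ℤ_[p]) = 1 + (p : ℤ_[p]) * z)
    (hβ : ∃ z : ℤ_[p], (β : ℤ_[p]) = 1 + (p : ℤ_[p]) * z)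
    (hind : ∀ n m : ℤ, α ^ n * β ^ m = 1 → n = 0 ∧ m = 0)
    -- β^ℤ is dense in 1 + p^k ℤ_p where k = v_p(β - 1)
    (hdense : ∀ x : ℤ_[p], ‖x - 1‖ ≤ ‖(β : ℤ_[p]) - 1‖ →
      ∀ N : ℕ, ∃ m : ℤ, ‖x - ((β ^ m : ℤ_[p]ˣ) : ℤ_[p])‖ ≤ (p : ℝ) ^ (-(N : ℤ))) :
    -- α^ℤ is codense in α^ℤ·β^ℤ
    ∀ n m : ℤ, ∀ N : ℕ, ∃ n' m' : ℤ, m' ≠ 0 ∧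
      ‖((α ^ n * β ^ m : ℤ_[p]ˣ) : ℤ_[p]) - ((α ^ n' * β ^ m' : ℤ_[p]ˣ) : ℤ_[p])‖
        ≤ (p : ℝ) ^ (-(N : ℤ)) :=
  stmt_9_general p α β hβ
end

section
/- Let K be a field of characteristic zero, G a subgroup of K^×, and Γ a subgroup of G such that every equation a_1 x_1 + … + a_n x_n = 1 with a_i ∈ ℚ^× has the same nondegenerate solutions in Γ^n as in G^n. If g ∈ G is algebraic over ℚ(Γ) of degree d, then g^d ∈ Γ. -/
/-!
Write `d` for the degree of `g` over `F = ℚ(Γ)`. Clearing denominators in the minimal polynomial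
of `g` over `F` gives a vanishing sum `∑ c γ g ^ i` with `c ∈ ℤ`, `γ ∈ Γ` and `i ≤ d`, in which
the terms with `i = d` do not cancel. Hence some minimal vanishing subsum contains a term with
`i = d` and a term with `i = e < d`. Divided by one of its terms, a minimal vanishing subsum is a
nondegenerate solution in `G` of a rational unit equation, so the ratios of its terms lie in `Γ`;
this gives `g ^ (d - e) ∈ Γ ⊆ F`. As `g` is then a root of `X ^ (d - e) - g ^ (d - e) ∈ F[X]`,
`d ≤ d - e`, so `e = 0` and `g ^ d ∈ Γ`.
-/

open Finset Polynomial

section VanishingSubsums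

variable {ι M : Type*} [AddCommGroup M]

def VanishingSubsum (f : ι → M) (T : Finset ι) : Prop :=
  T.Nonempty ∧ ∑ i ∈ T, f i = 0

theorem sum_ne_zero_of_minimal_vanishingSubsum {f : ι → M} {T I : Finset ι}
    (hT : Minimal (VanishingSubsum f) T) (hIT : I ⊂ T) (hI : I.Nonempty) :
    ∑ i ∈ I, f i ≠ 0 :=
  fun h => hIT.2 (hT.2 ⟨hI, h⟩ hIT.1)

theorem exists_minimal_vanishingSubsum_of_sum_filter_ne_zero [DecidableEq ι] (f : ι → M)
    (P : ι → Prop) [DecidablePred P] (s : Finset ι) (hs : ∑ i ∈ s, f i = 0)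
    (hP : ∑ i ∈ s with P i, f i ≠ 0) :
    ∃ T ⊆ s, Minimal (VanishingSubsum f) T ∧ ∃ i ∈ T, ∃ j ∈ T, P i ∧ ¬P j := by
  induction s using Finset.strongInduction with
  | H s ih =>
  have hsne : s.Nonempty := by
    by_contra! h
    simp [h] at hP
  obtain ⟨T, hTs, hT⟩ := exists_minimal_le_of_wellFoundedLT (VanishingSubsum f) s ⟨hsne, hs⟩
  by_cases hsplit : ∃ i ∈ T, ∃ j ∈ T, P i ∧ ¬P j
  · exact ⟨T, hTs, hT, hsplit⟩
  -- `P` is constant on `T`, so removing `T` changes neither sum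
  have hTP : ∑ i ∈ T with P i, f i = 0 := by
    by_cases h : ∃ i ∈ T, P i
    · obtain ⟨i, hi, hPi⟩ := h
      rw [filter_true_of_mem fun j hj => by_contra fun hPj => hsplit ⟨i, hi, j, hj, hPi, hPj⟩]
      exact hT.1.2
    · rw [filter_false_of_mem fun i hi hPi => h ⟨i, hi, hPi⟩, sum_empty]
  have hfilter : (s \ T).filter P = s.filter P \ T.filter P := by
    ext i
    simp only [mem_filter, mem_sdiff]
    tauto
  obtain ⟨T', hT's, hT'⟩ := ih (s \ T) (sdiff_ssubset hTs hT.1.1)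
    (by rw [sum_sdiff_eq_sub hTs, hs, hT.1.2, sub_zero])
    (by rwa [hfilter, sum_sdiff_eq_sub (filter_subset_filter _ hTs), hTP, sub_zero])
  exact ⟨T', hT's.trans sdiff_subset, hT'⟩

end VanishingSubsums

theorem Subfield.exists_ne_zero_mul_mem_subringClosure {K : Type*} [Field K] {S : Set K}
    {ι : Type*} (t : Finset ι) (x : ι → K) (hx : ∀ i ∈ t, x i ∈ Subfield.closure S) :
    ∃ z ∈ Subring.closure S, z ≠ 0 ∧ ∀ i ∈ t, z * x i ∈ Subring.closure S := by
  classical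
  induction t using Finset.induction_on with
  | empty => exact ⟨1, one_mem _, one_ne_zero, by simp⟩
  | insert i t hit ih =>
    obtain ⟨z, hz, hz0, hzt⟩ := ih fun j hj => hx j (mem_insert_of_mem hj)
    obtain ⟨a, ha, b, hb, hab⟩ := Subfield.mem_closure_iff.1 (hx i (mem_insert_self i t))
    obtain rfl | hb0 := eq_or_ne b 0
    · refine ⟨z, hz, hz0, ?_⟩
      simpa [← hab] using hzt
    refine ⟨b * z, mul_mem hb hz, mul_ne_zero hb0 hz0, ?_⟩
    simp only [mem_insert, forall_eq_or_imp]
    refine ⟨?_, fun j hj => by simpa only [mul_assoc] using mul_mem hb (hzt j hj)⟩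
    rw [← hab, mul_comm b, mul_assoc, mul_div_cancel₀ a hb0]
    exact mul_mem hz ha

theorem Polynomial.exists_ne_zero_mul_coeff_mem_subringClosure {K : Type*} [Field K] {S : Set K}
    (P : (Subfield.closure S)[X]) :
    ∃ z ∈ Subring.closure S, z ≠ 0 ∧ ∀ n, z * P.coeff n ∈ Subring.closure S := by
  obtain ⟨z, hz, hz0, hzP⟩ := Subfield.exists_ne_zero_mul_mem_subringClosure P.support
    (fun n => (P.coeff n : K)) fun n _ => (P.coeff n).2
  refine ⟨z, hz, hz0, fun n => ?_⟩
  by_cases hn : n ∈ P.support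
  · exact hzP n hn
  · rw [notMem_support_iff.1 hn, ZeroMemClass.coe_zero, mul_zero]
    exact zero_mem _

theorem Submonoid.mem_span_int_of_mem_subringClosure {R : Type*} [Ring R] (M : Submonoid R)
    {x : R} (hx : x ∈ Subring.closure (M : Set R)) : x ∈ Submodule.span ℤ (M : Set R) := by
  have : x ∈ Subalgebra.toSubmodule (Algebra.adjoin ℤ (M : Set R)) := by
    rw [Algebra.adjoin_int]
    exact hx
  rwa [Algebra.adjoin_eq_span, Submonoid.closure_eq] at this

theorem exists_finsupp_of_mem_span_int_units {K : Type*} [Field K] {Γ : Subgroup Kˣ} {x : K}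
    (hx : x ∈ Submodule.span ℤ (Units.val '' (Γ : Set Kˣ))) :
    ∃ l : Kˣ →₀ ℤ, ↑l.support ⊆ (Γ : Set Kˣ) ∧ ∑ u ∈ l.support, (l u : K) * u = x := by
  obtain ⟨l, hl, rfl⟩ := (Finsupp.mem_span_image_iff_linearCombination ℤ).1 hx
  exact ⟨l, hl, by simp [Finsupp.linearCombination_apply, Finsupp.sum, zsmul_eq_mul]⟩

section UnitEquation

variable {K : Type*} [Field K]

def NondegenerateSolutionsLieIn (G Γ : Subgroup Kˣ) : Prop :=
  ∀ (n : ℕ) (a : Fin n → ℚ), (∀ i, a i ≠ 0) →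
    ∀ g : Fin n → Kˣ, (∀ i, g i ∈ G) →
      (∑ i, (a i : K) * ((g i : Kˣ) : K)) = 1 →
      (∀ I : Finset (Fin n), I.Nonempty →
        (∑ i ∈ I, (a i : K) * ((g i : Kˣ) : K)) ≠ 0) →
      ∀ i, g i ∈ Γ

variable {G Γ : Subgroup Kˣ}

namespace NondegenerateSolutionsLieIn

theorem mem_of_finset (h : NondegenerateSolutionsLieIn G Γ) {ι : Type*} {T : Finset ι}
    {a : ι → ℚ} {w : ι → Kˣ} (ha : ∀ i ∈ T, a i ≠ 0) (hw : ∀ i ∈ T, w i ∈ G)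
    (hsum : ∑ i ∈ T, (a i : K) * w i = 1)
    (hnd : ∀ I ⊆ T, I.Nonempty → ∑ i ∈ I, (a i : K) * w i ≠ 0) {i : ι} (hi : i ∈ T) :
    w i ∈ Γ := by
  let e : Fin T.card ↪ ι := T.equivFin.symm.toEmbedding.trans (Function.Embedding.subtype _)
  have he : ∀ m, e m ∈ T := fun m => (T.equivFin.symm m).2
  have hmap : ∀ I : Finset (Fin T.card), I.map e ⊆ T := fun I x hx => by
    obtain ⟨m, -, rfl⟩ := mem_map.1 hx
    exact he m
  have huniv : univ.map e = T := by
    refine (hmap univ).antisymm fun x hx => mem_map.2 ⟨T.equivFin ⟨x, hx⟩, mem_univ _, ?_⟩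
    simp [e]
  have := h T.card (a ∘ e) (fun m => ha _ (he m)) (w ∘ e) (fun m => hw _ (he m))
    (by rw [← huniv, sum_map] at hsum; exact hsum)
    (fun I hI => by simpa only [sum_map, Function.comp_apply] using hnd _ (hmap I) (hI.map))
    (T.equivFin ⟨i, hi⟩)
  simpa [e] using this

theorem div_mem_of_minimal [CharZero K] (h : NondegenerateSolutionsLieIn G Γ) {ι : Type*}
    [DecidableEq ι] {T : Finset ι} {q : ι → ℚ} {w : ι → Kˣ}
    (hT : Minimal (VanishingSubsum fun p => (q p : K) * w p) T) (hq : ∀ p ∈ T, q p ≠ 0)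
    (hw : ∀ p ∈ T, w p ∈ G) {i j : ι} (hi : i ∈ T) (hj : j ∈ T) : w j / w i ∈ Γ := by
  obtain rfl | hji := eq_or_ne j i
  · rw [div_self']
    exact Γ.one_mem
  set f := fun p => (q p : K) * w p
  have hfi : f i ≠ 0 := mul_ne_zero (Rat.cast_ne_zero.2 (hq i hi)) (w i).ne_zero
  -- dividing the vanishing sum by its `i`-th term gives a unit equation over `T.erase i`
  have hterm : ∀ p, ((-q p / q i : ℚ) : K) * ((w p / w i : Kˣ) : K) = -f p / f i := by
    intro p
    simp only [f, Rat.cast_div, Rat.cast_neg, Units.val_div_eq_div_val]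
    ring
  refine h.mem_of_finset (T := T.erase i) (a := fun p => -q p / q i) (w := fun p => w p / w i)
    (fun p hp => div_ne_zero (neg_ne_zero.2 (hq p (mem_of_mem_erase hp))) (hq i hi))
    (fun p hp => div_mem (hw p (mem_of_mem_erase hp)) (hw i hi)) ?_ ?_ (mem_erase.2 ⟨hji, hj⟩)
  · simp_rw [hterm, ← sum_div, sum_neg_distrib, sum_erase_eq_sub hi, hT.1.2, zero_sub, neg_neg]
    exact div_self hfi
  · intro I hI hIne
    simp_rw [hterm, ← sum_div, sum_neg_distrib]
    exact div_ne_zero (neg_ne_zero.2 (sum_ne_zero_of_minimal_vanishingSubsum hT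
      (hI.trans_ssubset (erase_ssubset hi)) hIne)) hfi

theorem exists_pow_mem_of_sum_eq_zero [CharZero K] (h : NondegenerateSolutionsLieIn G Γ)
    (hΓG : Γ ≤ G) {g : Kˣ} (hg : g ∈ G) {ι : Type*} (s : Finset ι) (q : ι → ℚ) (γ : ι → Kˣ)
    (e : ι → ℕ) {d : ℕ} (hq : ∀ p ∈ s, q p ≠ 0) (hγ : ∀ p ∈ s, γ p ∈ Γ)
    (he : ∀ p ∈ s, e p ≤ d) (hsum : ∑ p ∈ s, (q p : K) * ((γ p * g ^ e p : Kˣ) : K) = 0)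
    (hlead : ∑ p ∈ s with e p = d, (q p : K) * ((γ p * g ^ e p : Kˣ) : K) ≠ 0) :
    ∃ k, 0 < k ∧ k ≤ d ∧ g ^ k ∈ Γ := by
  classical
  obtain ⟨T, hTs, hT, i, hi, j, hj, hid, hjd⟩ :=
    exists_minimal_vanishingSubsum_of_sum_filter_ne_zero _ (e · = d) s hsum hlead
  have hji : γ j * g ^ e j / (γ i * g ^ e i) ∈ Γ :=
    h.div_mem_of_minimal hT (fun p hp => hq p (hTs hp))
      (fun p hp => mul_mem (hΓG (hγ p (hTs hp))) (pow_mem hg _)) hi hj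
  rw [mul_div_mul_comm, Γ.mul_mem_cancel_left (div_mem (hγ j (hTs hj)) (hγ i (hTs hi))),
    hid] at hji
  have hjle := he j (hTs hj)
  refine ⟨d - e j, by omega, by omega, ?_⟩
  rw [pow_sub g hjle, ← div_eq_mul_inv, ← inv_div]
  exact inv_mem hji

theorem exists_pow_mem_of_aeval_eq_zero [CharZero K] (h : NondegenerateSolutionsLieIn G Γ)
    (hΓG : Γ ≤ G) {g : Kˣ} (hg : g ∈ G)
    {P : (Subfield.closure (Units.val '' (Γ : Set Kˣ)))[X]} (hP : P ≠ 0)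
    (hPg : aeval (g : K) P = 0) : ∃ k, 0 < k ∧ k ≤ P.natDegree ∧ g ^ k ∈ Γ := by
  classical
  set d := P.natDegree
  obtain ⟨z, -, hz0, hzP⟩ := P.exists_ne_zero_mul_coeff_mem_subringClosure
  choose l hlΓ hl using fun n => exists_finsupp_of_mem_span_int_units
    ((Γ.toSubmonoid.map (Units.coeHom K)).mem_span_int_of_mem_subringClosure (hzP n))
  have hinner : ∀ n, ∑ u ∈ (l n).support, ((l n u : ℚ) : K) * ((u * g ^ n : Kˣ) : K) =
      z * P.coeff n * (g : K) ^ n := by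
    intro n
    rw [← hl n, sum_mul]
    refine sum_congr rfl fun u _ => ?_
    push_cast
    ring
  refine h.exists_pow_mem_of_sum_eq_zero hΓG hg ((range (d + 1)).sigma fun n => (l n).support)
    (fun p => l p.1 p.2) (fun p => p.2) (fun p => p.1) (fun p hp => ?_) (fun p hp => ?_)
    (fun p hp => ?_) ?_ ?_
  · exact Int.cast_ne_zero.2 (Finsupp.mem_support_iff.1 (mem_sigma.1 hp).2)
  · exact hlΓ p.1 (mem_sigma.1 hp).2
  · exact Nat.lt_succ_iff.1 (mem_range.1 (mem_sigma.1 hp).1)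
  · rw [sum_sigma]
    simp_rw [hinner]
    rw [← mul_zero z, ← hPg, aeval_eq_sum_range, mul_sum]
    refine sum_congr rfl fun n _ => ?_
    rw [Algebra.smul_def, mul_assoc]
    rfl
  · have hlead : (P.coeff d : K) ≠ 0 := by
      rw [coeff_natDegree, Ne, ZeroMemClass.coe_eq_zero, leadingCoeff_eq_zero]
      exact hP
    rw [sum_filter, sum_sigma]
    simp_rw [sum_ite_irrel, sum_const_zero, sum_ite_eq', hinner, if_pos (self_mem_range_succ d)]
    exact mul_ne_zero (mul_ne_zero hz0 hlead) (pow_ne_zero _ g.ne_zero)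

end NondegenerateSolutionsLieIn

end UnitEquation

theorem natDegree_minpoly_le_of_pow_eq_algebraMap {F L : Type*} [Field F] [Ring L] [Algebra F L]
    {x : L} {k : ℕ} (hk : 0 < k) (c : F) (hx : x ^ k = algebraMap F L c) :
    (minpoly F x).natDegree ≤ k := by
  have hroot : aeval x (X ^ k - C c) = 0 := by simp [hx]
  have := natDegree_le_natDegree
    (minpoly.degree_le_of_ne_zero F x (X_pow_sub_C_ne_zero hk c) hroot)
  rwa [natDegree_X_pow_sub_C] at this

theorem stmt_11_general (K : Type*) [Field K] [CharZero K] (G Γ : Subgroup Kˣ) (hΓG : Γ ≤ G)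
    -- every nondegenerate solution in G of a rational unit equation lies in Γ
    (hMann : ∀ (n : ℕ) (a : Fin n → ℚ), (∀ i, a i ≠ 0) →
      ∀ g : Fin n → Kˣ, (∀ i, g i ∈ G) →
        (∑ i, (a i : K) * ((g i : Kˣ) : K)) = 1 →
        (∀ I : Finset (Fin n), I.Nonempty →
          (∑ i ∈ I, (a i : K) * ((g i : Kˣ) : K)) ≠ 0) →
        ∀ i, g i ∈ Γ)
    (g : Kˣ) (hg : g ∈ G) (d : ℕ)
    (hd : (minpoly (Subfield.closure (Units.val '' (Γ : Set Kˣ))) (g : K)).natDegree = d) :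
    g ^ d ∈ Γ := by
  obtain rfl | hd0 := eq_or_ne d 0
  · rw [pow_zero]
    exact Γ.one_mem
  have hP : minpoly (Subfield.closure (Units.val '' (Γ : Set Kˣ))) (g : K) ≠ 0 := by
    intro h
    rw [h, natDegree_zero] at hd
    exact hd0 hd.symm
  obtain ⟨k, hk0, hkd, hk⟩ :=
    NondegenerateSolutionsLieIn.exists_pow_mem_of_aeval_eq_zero hMann hΓG hg hP (minpoly.aeval _ _)
  have hdk : d ≤ k := hd ▸ natDegree_minpoly_le_of_pow_eq_algebraMap hk0
    ⟨_, Subfield.subset_closure ⟨g ^ k, hk, rfl⟩⟩ rfl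
  rwa [show d = k by omega]

theorem stmt_11 (K : Type*) [Field K] [CharZero K] (G Γ : Subgroup Kˣ) (hΓG : Γ ≤ G)
    -- every nondegenerate solution in G of a rational unit equation lies in Γ
    (hMann : ∀ (n : ℕ) (a : Fin n → ℚ), (∀ i, a i ≠ 0) →
      ∀ g : Fin n → Kˣ, (∀ i, g i ∈ G) →
        (∑ i, (a i : K) * ((g i : Kˣ) : K)) = 1 →
        (∀ I : Finset (Fin n), I.Nonempty →
          (∑ i ∈ I, (a i : K) * ((g i : Kˣ) : K)) ≠ 0) →
        ∀ i, g i ∈ Γ)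
    (g : Kˣ) (hg : g ∈ G) (d : ℕ)
    (hint : IsIntegral (Subfield.closure (Units.val '' (Γ : Set Kˣ))) (g : K))
    (hd : (minpoly (Subfield.closure (Units.val '' (Γ : Set Kˣ))) (g : K)).natDegree = d) :
    g ^ d ∈ Γ :=
  stmt_11_general K G Γ hΓG hMann g hg d hd
end

section
/- Let p be an odd prime and x ∈ ℚ_p. Then v_p(x) ≥ 0 if and only if 1 + p x² is a square in ℚ_p. -/
/-!
If `‖x‖ ≤ 1` then `1 + p x²` is congruent to `1` modulo `p`, and since `p` is odd the root `1`
of `X² - 1` is simple modulo `p`, so Hensel's lemma lifts it to a square root of `1 + p x²`.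
If `‖x‖ > 1` then `v(p x²) = 1 + 2 v(x) < 0 = v(1)`, so `1 + p x²` has odd valuation and
cannot be a square.
-/

open Polynomial

namespace PadicInt

variable {p : ℕ} [Fact p.Prime]

theorem norm_two_eq_one (hp2 : p ≠ 2) : ‖(2 : ℤ_[p])‖ = 1 := by
  have h := norm_natCast_eq_one_iff (p := p) (n := 2)
  rw [Nat.cast_ofNat] at h
  exact h.mpr ((Nat.coprime_primes Fact.out Nat.prime_two).mpr hp2)

theorem exists_sq_eq_of_norm_sub_one_lt (hp2 : p ≠ 2) {c : ℤ_[p]} (hc : ‖c - 1‖ < 1) :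
    ∃ z : ℤ_[p], z ^ 2 = c := by
  have hnorm :
      ‖(X ^ 2 - C c).aeval (1 : ℤ_[p])‖ < ‖(X ^ 2 - C c).derivative.aeval (1 : ℤ_[p])‖ ^ 2 := by
    simpa [norm_sub_rev, one_add_one_eq_two, norm_two_eq_one hp2] using hc
  obtain ⟨z, hz, -⟩ := hensels_lemma hnorm
  exact ⟨z, by simpa [sub_eq_zero] using hz⟩

end PadicInt

namespace Padic

variable {p : ℕ} [Fact p.Prime]

theorem exists_sq_eq_of_norm_sub_one_lt (hp2 : p ≠ 2) {c : ℚ_[p]} (hc : ‖c - 1‖ < 1) :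
    ∃ y : ℚ_[p], y ^ 2 = c := by
  have hc1 : ‖c‖ ≤ 1 := by
    simpa using (Padic.nonarchimedean (c - 1) 1).trans (max_le hc.le norm_one.le)
  obtain ⟨z, hz⟩ := PadicInt.exists_sq_eq_of_norm_sub_one_lt (c := ⟨c, hc1⟩) hp2 hc
  exact ⟨z, by simpa using congrArg ((↑) : ℤ_[p] → ℚ_[p]) hz⟩

theorem valuation_add_eq_of_lt {x y : ℚ_[p]} (hx : x ≠ 0) (h : x.valuation < y.valuation) :
    (x + y).valuation = x.valuation := by
  rcases eq_or_ne y 0 with rfl | hy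
  · rw [add_zero]
  have hlt : addValuation x < addValuation y := by
    rw [addValuation.apply hx, addValuation.apply hy]
    exact_mod_cast h
  have hsum := AddValuation.map_add_eq_of_lt_left addValuation hlt
  have hxy : x + y ≠ 0 := by
    rintro hxy
    rw [hxy, _root_.AddValuation.map_zero, addValuation.apply hx] at hsum
    exact WithTop.top_ne_coe hsum
  rw [addValuation.apply hxy, addValuation.apply hx] at hsum
  exact_mod_cast hsum

end Padic

theorem stmt_16 (p : ℕ) [Fact p.Prime] (hp2 : p ≠ 2) (x : ℚ_[p]) :
    ‖x‖ ≤ 1 ↔ ∃ y : ℚ_[p], y ^ 2 = 1 + (p : ℚ_[p]) * x ^ 2 := by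
  constructor
  · intro hx
    refine Padic.exists_sq_eq_of_norm_sub_one_lt hp2 ?_
    calc ‖1 + (p : ℚ_[p]) * x ^ 2 - 1‖ = (p : ℝ)⁻¹ * ‖x‖ ^ 2 := by
          rw [add_sub_cancel_left, norm_mul, norm_pow, Padic.norm_p]
      _ ≤ (p : ℝ)⁻¹ := mul_le_of_le_one_right (by positivity) (pow_le_one₀ (norm_nonneg x) hx)
      _ < 1 := inv_lt_one_of_one_lt₀ (mod_cast (Fact.out : p.Prime).one_lt)
  · rintro ⟨y, hy⟩
    by_contra hx
    rw [Padic.norm_le_one_iff_val_nonneg, not_le] at hx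
    have hx0 : x ≠ 0 := by rintro rfl; simp at hx
    have hp0 : (p : ℚ_[p]) ≠ 0 := mod_cast (Fact.out : p.Prime).ne_zero
    have hpx0 : (p : ℚ_[p]) * x ^ 2 ≠ 0 := mul_ne_zero hp0 (pow_ne_zero 2 hx0)
    have hpx : ((p : ℚ_[p]) * x ^ 2).valuation = 1 + 2 * x.valuation := by
      rw [Padic.valuation_mul hp0 (pow_ne_zero 2 hx0),
        Padic.valuation_p, Padic.valuation_pow, Nat.cast_ofNat]
    have hodd : (y ^ 2).valuation = 1 + 2 * x.valuation := by
      have hlt : ((p : ℚ_[p]) * x ^ 2).valuation < (1 : ℚ_[p]).valuation := by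
        rw [hpx, Padic.valuation_one]; omega
      rw [hy, add_comm, Padic.valuation_add_eq_of_lt hpx0 hlt, hpx]
    rw [Padic.valuation_pow, Nat.cast_ofNat] at hodd
    omega
end

section
/- Let x ∈ ℚ_2. Then v_2(x) ≥ 0 if and only if 1 + 2x³ is a cube in ℚ_2. -/
/-!
If `v₂(x) ≥ 0`, then `1 + 2x³ ≡ 1 (mod 2)` and `3` is a `2`-adic unit, so Hensel's lemma applied
to `X³ - (1 + 2x³)` at `1` gives a cube root. If `v₂(x) < 0`, the term `2x³` dominates, so
`v₂(1 + 2x³) = 1 + 3 v₂(x)` is not divisible by `3`, whereas the valuation of a cube is.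
-/

open Polynomial

theorem PadicInt.exists_pow_eq_of_norm_sub_one_lt {p : ℕ} [Fact p.Prime] {n : ℕ}
    (hn : p.Coprime n) {a : ℤ_[p]} (ha : ‖a - 1‖ < 1) : ∃ z : ℤ_[p], z ^ n = a := by
  set F : ℤ_[p][X] := X ^ n - C a
  have hF : ‖F.aeval (1 : ℤ_[p])‖ < ‖F.derivative.aeval (1 : ℤ_[p])‖ ^ 2 := by
    simpa [F, derivative_X_pow, norm_sub_rev, PadicInt.norm_natCast_eq_one_iff.mpr hn] using ha
  obtain ⟨z, hz, -⟩ := hensels_lemma hF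
  exact ⟨z, sub_eq_zero.mp (by simpa [F] using hz)⟩

theorem Padic.valuation_add_eq_of_norm_lt {p : ℕ} [Fact p.Prime] {x y : ℚ_[p]}
    (h : ‖x‖ < ‖y‖) : (x + y).valuation = y.valuation := by
  have hy : y ≠ 0 := norm_pos_iff.mp ((norm_nonneg x).trans_lt h)
  have hxy : ‖x + y‖ = ‖y‖ := by
    rw [Padic.add_eq_max_of_ne h.ne, max_eq_right h.le]
  have hxy0 : x + y ≠ 0 := norm_pos_iff.mp (hxy ▸ norm_pos_iff.mpr hy)
  have hp : (1 : ℝ) < p := mod_cast (Fact.out : p.Prime).one_lt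
  rwa [Padic.norm_eq_zpow_neg_valuation hxy0, Padic.norm_eq_zpow_neg_valuation hy,
    zpow_right_inj₀ (by linarith) hp.ne', neg_inj] at hxy

theorem Padic.natCast_le_norm_of_one_lt_norm {p : ℕ} [Fact p.Prime] {x : ℚ_[p]}
    (hx : 1 < ‖x‖) : (p : ℝ) ≤ ‖x‖ := by
  by_contra! h
  have := (Padic.norm_le_pow_iff_norm_lt_pow_add_one x 0).mpr (by simpa using h)
  simp only [zpow_zero] at this
  linarith

theorem stmt_17 (x : ℚ_[2]) :
    ‖x‖ ≤ 1 ↔ ∃ y : ℚ_[2], y ^ 3 = 1 + 2 * x ^ 3 := by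
  constructor
  · intro hx
    obtain ⟨x, rfl⟩ : ∃ x' : ℤ_[2], (x' : ℚ_[2]) = x := ⟨⟨x, hx⟩, rfl⟩
    have hnear : ‖(1 + 2 * x ^ 3) - 1‖ < 1 := by
      rw [add_sub_cancel_left, mul_comm]
      exact PadicInt.norm_lt_one_mul
        (by simpa using PadicInt.norm_natCast_lt_one_iff (p := 2) (n := 2))
    obtain ⟨z, hz⟩ := PadicInt.exists_pow_eq_of_norm_sub_one_lt (n := 3) (by norm_num) hnear
    exact ⟨z, by exact_mod_cast congrArg ((↑) : ℤ_[2] → ℚ_[2]) hz⟩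
  · rintro ⟨y, hy⟩
    by_contra! hx
    have hx0 : x ≠ 0 := norm_pos_iff.mp (one_pos.trans hx)
    have hx2 : (2 : ℝ) ≤ ‖x‖ := by exact_mod_cast Padic.natCast_le_norm_of_one_lt_norm hx
    have hdom : ‖(1 : ℚ_[2])‖ < ‖2 * x ^ 3‖ := by
      have h2 : ‖(2 : ℚ_[2])‖ = 2⁻¹ := by simpa using Padic.norm_p (p := 2)
      rw [norm_one, norm_mul, norm_pow, h2]
      nlinarith [pow_le_pow_left₀ zero_le_two hx2 3]
    have hval := congrArg Padic.valuation hy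
    rw [Padic.valuation_add_eq_of_norm_lt hdom, Padic.valuation_pow,
      Padic.valuation_mul two_ne_zero (pow_ne_zero 3 hx0), Padic.valuation_pow] at hval
    simp only [Padic.valuation_ofNat, padicValNat_self] at hval
    omega
end
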